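/- Let a compact metric group G act continuously on the Euclidean space ℝ^k and put r := lim_{κ↑1/(4k)} Sep(G; κ, κ). Then for any x ∈ ℝ^k there exists a point z_x in the orbit Gx such that d_{ℝ^k}(z_x, g z_x) ≤ √k · ω_x(+r) + ρ(+√k · ω_x(+r)) for every g ∈ G. -/

import Mathlib

open MeasureTheory Metric Set Filter Topology ENNReal

noncomputable section

/-- The extended distance `d(A,B)` between two subsets of an (extended) metric space. -/
def setEDist {X : Type*} [PseudoEMetricSpace X] (A B : Set X) : ℝ≥0∞ :=
  ⨅ (x ∈ A) (y ∈ B), edist x y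

/-- The partial diameter `diam(ν, ν(X) − κ)`: the infimum of the diameters of Borel
subsets of measure at least `ν(X) − κ`. -/
def partialDiam {X : Type*} [PseudoEMetricSpace X] [MeasurableSpace X]
    (ν : Measure X) (κ : ℝ≥0∞) : ℝ≥0∞ :=
  ⨅ (A : Set X) (_ : MeasurableSet A) (_ : ν univ - κ ≤ ν A), EMetric.diam A

/-- The separation distance `Sep(ν; κ₁, κ₂)`: the supremum of `d(A,B)` over Borel sets
`A, B` with `ν(A) ≥ κ₁` and `ν(B) ≥ κ₂`. -/
def sepDist {X : Type*} [PseudoEMetricSpace X] [MeasurableSpace X]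
    (ν : Measure X) (κ₁ κ₂ : ℝ≥0∞) : ℝ≥0∞ :=
  ⨆ (A : Set X) (B : Set X) (_ : MeasurableSet A) (_ : MeasurableSet B)
    (_ : κ₁ ≤ ν A) (_ : κ₂ ≤ ν B), setEDist A B

/-- The observable diameter `ObsDiam_Y(X; −κ)`. -/
def obsDiam (Y : Type*) [PseudoEMetricSpace Y] [MeasurableSpace Y]
    {X : Type*} [PseudoEMetricSpace X] [MeasurableSpace X]
    (μ : Measure X) (κ : ℝ≥0∞) : ℝ≥0∞ :=
  ⨆ (f : X → Y) (_ : LipschitzWith 1 f), partialDiam (Measure.map f μ) κ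

/-- A sequence of mm-spaces is a Lévy family if its observable diameters (viewed in `ℝ`)
tend to zero for every `κ > 0`. -/
def IsLevyFamily (X : ℕ → Type*) [∀ n, PseudoEMetricSpace (X n)]
    [∀ n, MeasurableSpace (X n)] (μ : ∀ n, Measure (X n)) : Prop :=
  ∀ κ : ℝ≥0∞, 0 < κ → Tendsto (fun n => obsDiam ℝ (μ n) κ) atTop (nhds 0)

/-- `ρ(η)` for an action of `G` on `X`: the supremum of `d(gx, gy)` over `g ∈ G` and
`x, y ∈ X` with `d(x,y) ≤ η`. -/
def actRho (G X : Type*) [SMul G X] [PseudoEMetricSpace X] (η : ℝ≥0∞) : ℝ≥0∞ :=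
  ⨆ (g : G) (x : X) (y : X) (_ : edist x y ≤ η), edist (g • x) (g • y)

/-- `ρ(+η) = lim_{η' ↓ η} ρ(η')`. -/
def actRhoPlus (G X : Type*) [SMul G X] [PseudoEMetricSpace X] (η : ℝ≥0∞) : ℝ≥0∞ :=
  ⨅ (η' : ℝ≥0∞) (_ : η < η'), actRho G X η'

/-- `ω_x(η)`: the supremum of `d(gx, g'x)` over `g, g' ∈ G` with `d_G(g,g') ≤ η`. -/
def actOmega (G : Type*) {X : Type*} [PseudoEMetricSpace G] [SMul G X]
    [PseudoEMetricSpace X] (x : X) (η : ℝ≥0∞) : ℝ≥0∞ :=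
  ⨆ (g : G) (g' : G) (_ : edist g g' ≤ η), edist (g • x) (g' • x)

/-- `ω_x(+η) = lim_{η' ↓ η} ω_x(η')`. -/
def actOmegaPlus (G : Type*) {X : Type*} [PseudoEMetricSpace G] [SMul G X]
    [PseudoEMetricSpace X] (x : X) (η : ℝ≥0∞) : ℝ≥0∞ :=
  ⨅ (η' : ℝ≥0∞) (_ : η < η'), actOmega G x η'


/-! Push the Haar measure forward along the orbit map `u ↦ u • x`. In each coordinate `i`, the
lower and upper `1/(4k)`-quantiles `aᵢ`, `bᵢ` satisfy `bᵢ - aᵢ ≤ ω_x(+r)`: the sublevel set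
`{u | (u • x) i ≤ aᵢ}` and the superlevel set `{u | bᵢ ≤ (u • x) i}` both have measure at least
`1/(4k)`, so they come within distance `r` of each other in `G`. Hence each box
`∏ᵢ [aᵢ - ε, bᵢ + ε]` misses less than `2k · 1/(4k) = 1/2` of the measure, so its preimage in `G`
meets its own translate by any `g`. By compactness some `h₀` lies in all these preimages, and
`z = h₀ • x` is moved by `g` at most the box diameter `√k ω_x(+r)` plus the distortion `ρ` of that
diameter. -/

section Action

variable {G X : Type*} [SMul G X] [PseudoEMetricSpace X]

theorem edist_smul_le_actRho {x y : X} {η : ℝ≥0∞} (h : edist x y ≤ η) (g : G) :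
    edist (g • x) (g • y) ≤ actRho G X η :=
  le_iSup_of_le g <| le_iSup₂_of_le x y <| le_iSup_of_le h le_rfl

theorem edist_smul_le_actOmega [PseudoEMetricSpace G] (x : X) {g g' : G} {η : ℝ≥0∞}
    (h : edist g g' ≤ η) : edist (g • x) (g' • x) ≤ actOmega G x η :=
  le_iSup₂_of_le g g' <| le_iSup_of_le h le_rfl

-- Triangle inequality through `g • y`, then let `η` decrease to `D`.
theorem edist_smul_le_add_actRhoPlus {z : X} {g : G} {D : ℝ≥0∞}
    (h : ∀ η > D, ∃ y, edist z (g • y) ≤ η ∧ edist y z ≤ η) :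
    edist z (g • z) ≤ D + actRhoPlus G X D := by
  simp only [actRhoPlus, ENNReal.add_iInf]
  refine le_iInf₂ fun η' hη' => ?_
  rw [add_comm, ← tsub_le_iff_left]
  refine le_of_forall_gt_imp_ge_of_dense fun η hη => ?_
  obtain ⟨y, hzy, hyz⟩ := h (min η η') (lt_min hη hη')
  rw [tsub_le_iff_left, add_comm]
  calc edist z (g • z) ≤ edist z (g • y) + edist (g • y) (g • z) := edist_triangle _ _ _
    _ ≤ η + actRho G X η' :=
      add_le_add (hzy.trans (min_le_left _ _))
        (edist_smul_le_actRho (hyz.trans (min_le_right _ _)) g)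

end Action

section Separation

variable {X : Type*} [PseudoEMetricSpace X]

theorem exists_edist_lt_of_setEDist_lt {A B : Set X} {η : ℝ≥0∞} (h : setEDist A B < η) :
    ∃ x ∈ A, ∃ y ∈ B, edist x y < η := by
  simpa only [setEDist, iInf_lt_iff, exists_prop] using h

theorem setEDist_le_sepDist [MeasurableSpace X] {ν : Measure X} {A B : Set X} {κ₁ κ₂ : ℝ≥0∞}
    (hA : MeasurableSet A) (hB : MeasurableSet B) (hκA : κ₁ ≤ ν A) (hκB : κ₂ ≤ ν B) :
    setEDist A B ≤ sepDist ν κ₁ κ₂ :=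
  le_iSup₂_of_le A B <| le_iSup₂_of_le hA hB <| le_iSup₂_of_le hκA hκB le_rfl

end Separation

theorem ofReal_sub_le_actOmegaPlus {G X : Type*} [PseudoEMetricSpace G] [MeasurableSpace G]
    [SMul G X] [PseudoEMetricSpace X] {μ : Measure G} {φ : X → ℝ} (hφ : LipschitzWith 1 φ)
    {x : X} {a b : ℝ} {κ₀ : ℝ≥0∞}
    (hA : MeasurableSet {g : G | φ (g • x) ≤ a}) (hB : MeasurableSet {g : G | b ≤ φ (g • x)})
    (hκA : κ₀ ≤ μ {g | φ (g • x) ≤ a}) (hκB : κ₀ ≤ μ {g | b ≤ φ (g • x)}) :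
    ENNReal.ofReal (b - a) ≤
      actOmegaPlus G x (⨅ (κ : ℝ≥0∞) (_ : κ < κ₀), sepDist μ κ κ) := by
  refine le_iInf₂ fun η hη => ?_
  have hsep : setEDist {g : G | φ (g • x) ≤ a} {g | b ≤ φ (g • x)} < η :=
    lt_of_le_of_lt (le_iInf₂ fun κ hκ =>
      setEDist_le_sepDist hA hB (hκ.le.trans hκA) (hκ.le.trans hκB)) hη
  obtain ⟨g, hg, g', hg', hgg'⟩ := exists_edist_lt_of_setEDist_lt hsep
  calc ENNReal.ofReal (b - a) ≤ edist (φ (g • x)) (φ (g' • x)) := by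
        rw [edist_dist, Real.dist_eq, abs_sub_comm]
        exact ENNReal.ofReal_le_ofReal ((sub_le_sub hg' hg).trans (le_abs_self _))
    _ ≤ edist (g • x) (g' • x) := by simpa using hφ.edist_le_mul (g • x) (g' • x)
    _ ≤ actOmega G x η := edist_smul_le_actOmega x hgg'.le

section Quantile

variable {Ω : Type*} [MeasurableSpace Ω] (μ : Measure Ω) [IsProbabilityMeasure μ]
  {φ : Ω → ℝ} {κ : ℝ≥0∞}

theorem exists_lower_quantile (hφ : Measurable φ) (hκ₀ : 0 < κ) (hκ₁ : κ < 1) :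
    ∃ a, κ ≤ μ {ω | φ ω ≤ a} ∧ ∀ a' < a, μ {ω | φ ω ≤ a'} < κ := by
  have := Measure.isProbabilityMeasure_map (μ := μ) hφ.aemeasurable
  set F := ProbabilityTheory.cdf (μ.map φ)
  have hF : ∀ t, μ {ω | φ ω ≤ t} = ENNReal.ofReal (F t) := fun t => by
    rw [ProbabilityTheory.ofReal_cdf, Measure.map_apply hφ measurableSet_Iic]
    rfl
  have hκ : κ ≠ ⊤ := hκ₁.ne_top
  have hc₀ : 0 < κ.toReal := ENNReal.toReal_pos hκ₀.ne' hκ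
  have hc₁ : κ.toReal < 1 := ENNReal.toReal_lt_of_lt_ofReal (by simpa using hκ₁)
  set S := {t | κ.toReal ≤ F t}
  have hSne : S.Nonempty :=
    ((ProbabilityTheory.tendsto_cdf_atTop _).eventually (eventually_ge_nhds hc₁)).exists
  obtain ⟨t₀, ht₀⟩ := ((ProbabilityTheory.tendsto_cdf_atBot _).eventually
    (eventually_lt_nhds hc₀)).exists_forall_of_atBot
  have hSbdd : BddBelow S := ⟨t₀, fun t ht => le_of_not_ge fun h => (ht.trans_lt (ht₀ t h)).false⟩
  refine ⟨sInf S, ?_, fun a' ha' => ?_⟩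
  · rw [hF, ENNReal.le_ofReal_iff_toReal_le hκ (ProbabilityTheory.cdf_nonneg _ _)]
    refine ge_of_tendsto ((F.right_continuous (sInf S)).mono Ioi_subset_Ici_self) ?_
    filter_upwards [self_mem_nhdsWithin] with t ht
    obtain ⟨s, hs, hst⟩ := exists_lt_of_csInf_lt hSne ht
    exact hs.trans (F.mono hst.le)
  · rw [hF, ENNReal.ofReal_lt_iff_lt_toReal (ProbabilityTheory.cdf_nonneg _ _) hκ]
    exact not_le.mp (show a' ∉ S from notMem_of_lt_csInf ha' hSbdd)

theorem exists_upper_quantile (hφ : Measurable φ) (hκ₀ : 0 < κ) (hκ₁ : κ < 1) :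
    ∃ b, κ ≤ μ {ω | b ≤ φ ω} ∧ ∀ b', b < b' → μ {ω | b' ≤ φ ω} < κ := by
  obtain ⟨a, ha, ha'⟩ := exists_lower_quantile μ hφ.neg hκ₀ hκ₁
  have hneg : ∀ t, {ω | -φ ω ≤ t} = {ω | -t ≤ φ ω} := fun t => by simp only [neg_le]
  refine ⟨-a, hneg a ▸ ha, fun b' hb' => ?_⟩
  rw [← neg_neg b', ← hneg]
  exact ha' (-b') (by linarith)

end Quantile

theorem EuclideanSpace.edist_le_sqrt_card_mul {ι : Type*} [Fintype ι]
    {p q : EuclideanSpace ℝ ι} {C : ℝ≥0∞} (h : ∀ i, edist (p i) (q i) ≤ C) :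
    edist p q ≤ ENNReal.ofReal √(Fintype.card ι) * C := by
  have hK : (((Fintype.card ι : NNReal) ^ (1 / (2 : ℝ≥0∞)).toReal : NNReal) : ℝ≥0∞) =
      ENNReal.ofReal √(Fintype.card ι) := by
    rw [← ENNReal.ofReal_coe_nnreal, NNReal.coe_rpow, Real.sqrt_eq_rpow]
    norm_num
  calc edist p q ≤ _ * edist (WithLp.ofLp p) (WithLp.ofLp q) :=
        PiLp.antilipschitzWith_ofLp 2 (fun _ : ι => ℝ) p q
    _ ≤ ENNReal.ofReal √(Fintype.card ι) * C := by
        rw [hK]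
        gcongr
        exact edist_pi_le_iff.2 h

theorem edist_le_of_mem_Icc_of_ofReal_sub_le {s t a b ε : ℝ} {ω : ℝ≥0∞}
    (hs : s ∈ Icc (a - ε) (b + ε)) (ht : t ∈ Icc (a - ε) (b + ε))
    (hω : ENNReal.ofReal (b - a) ≤ ω) : edist s t ≤ ω + ENNReal.ofReal (2 * ε) := by
  calc edist s t ≤ ENNReal.ofReal (b - a + 2 * ε) := by
        rw [edist_dist]
        exact ENNReal.ofReal_le_ofReal ((Real.dist_le_of_mem_Icc hs ht).trans_eq (by ring))
    _ ≤ ENNReal.ofReal (b - a) + ENNReal.ofReal (2 * ε) := ENNReal.ofReal_add_le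
    _ ≤ ω + ENNReal.ofReal (2 * ε) := by gcongr

theorem measure_compl_setOf_forall_mem_Icc_lt {Ω ι : Type*} [MeasurableSpace Ω] [Fintype ι]
    [Nonempty ι] {μ : Measure Ω} {φ : ι → Ω → ℝ} {a b : ι → ℝ} {κ : ℝ≥0∞}
    (ha : ∀ i, ∀ a' < a i, μ {ω | φ i ω ≤ a'} < κ)
    (hb : ∀ i, ∀ b', b i < b' → μ {ω | b' ≤ φ i ω} < κ) {ε : ℝ} (hε : 0 < ε) :
    μ {ω | ∀ i, φ i ω ∈ Icc (a i - ε) (b i + ε)}ᶜ < Fintype.card ι * (2 * κ) := by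
  have hsub : {ω | ∀ i, φ i ω ∈ Icc (a i - ε) (b i + ε)}ᶜ ⊆
      ⋃ i, {ω | φ i ω ≤ a i - ε} ∪ {ω | b i + ε ≤ φ i ω} := by
    intro ω hω
    simp only [mem_compl_iff, mem_setOf_eq, not_forall, mem_Icc, not_and_or, not_le] at hω
    obtain ⟨i, hi | hi⟩ := hω
    exacts [mem_iUnion.2 ⟨i, Or.inl hi.le⟩, mem_iUnion.2 ⟨i, Or.inr hi.le⟩]
  calc μ {ω | ∀ i, φ i ω ∈ Icc (a i - ε) (b i + ε)}ᶜ
      ≤ ∑ i, μ ({ω | φ i ω ≤ a i - ε} ∪ {ω | b i + ε ≤ φ i ω}) :=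
        (measure_mono hsub).trans (measure_iUnion_fintype_le μ _)
    _ ≤ ∑ i, (μ {ω | φ i ω ≤ a i - ε} + μ {ω | b i + ε ≤ φ i ω}) :=
        Finset.sum_le_sum fun i _ => measure_union_le _ _
    _ < ∑ _i : ι, (κ + κ) :=
        ENNReal.sum_lt_sum_of_nonempty Finset.univ_nonempty fun i _ =>
          ENNReal.add_lt_add (ha i _ (by linarith)) (hb i _ (by linarith))
    _ = Fintype.card ι * (2 * κ) := by simp [two_mul, mul_add]

theorem exists_mem_and_mul_mem {G : Type*} [Group G] [MeasurableSpace G] [MeasurableMul G]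
    (μ : Measure G) [μ.IsMulLeftInvariant] [IsProbabilityMeasure μ] {A : Set G}
    (hA : μ Aᶜ < 2⁻¹) (g : G) : ∃ v ∈ A, g * v ∈ A := by
  by_contra! h
  have hcover : univ ⊆ Aᶜ ∪ (fun v => g * v) ⁻¹' Aᶜ := fun v _ => by
    by_cases hv : v ∈ A
    exacts [Or.inr (h v hv), Or.inl hv]
  have : (1 : ℝ≥0∞) < 1 :=
    calc (1 : ℝ≥0∞) = μ univ := measure_univ.symm
      _ ≤ μ Aᶜ + μ ((fun v => g * v) ⁻¹' Aᶜ) := (measure_mono hcover).trans (measure_union_le _ _)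
      _ = μ Aᶜ + μ Aᶜ := by rw [measure_preimage_mul]
      _ < 2⁻¹ + 2⁻¹ := ENNReal.add_lt_add hA hA
      _ = 1 := ENNReal.inv_two_add_inv_two
  exact this.false

theorem exists_forall_pos_mem_of_monotone {X : Type*} [TopologicalSpace X] [CompactSpace X]
    {A : ℝ → Set X} (hmono : Monotone A) (hne : ∀ ε > 0, (A ε).Nonempty)
    (hcl : ∀ ε, IsClosed (A ε)) : ∃ x, ∀ ε > 0, x ∈ A ε := by
  obtain ⟨x, hx⟩ := IsCompact.nonempty_iInter_of_directed_nonempty_isCompact_isClosed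
    (fun ε : Ioi (0 : ℝ) => A ε) (hmono.comp (Subtype.mono_coe _)).directed_ge
    (fun ε => hne ε ε.2) (fun ε => (hcl ε).isCompact) (fun ε => hcl ε)
  exact ⟨x, fun ε hε => mem_iInter.1 hx ⟨ε, hε⟩⟩

theorem ENNReal.exists_pos_mul_add_ofReal_lt {c a η : ℝ≥0∞} (hc : c ≠ ⊤) (h : c * a < η) :
    ∃ ε > 0, c * (a + ENNReal.ofReal ε) < η := by
  have hlim : Tendsto (fun ε : ℝ => c * (a + ENNReal.ofReal ε)) (𝓝[>] 0) (𝓝 (c * a)) := by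
    have h₀ : Tendsto ENNReal.ofReal (𝓝[>] 0) (𝓝 0) := by
      simpa using (ENNReal.continuous_ofReal.tendsto 0).mono_left nhdsWithin_le_nhds
    simpa using ENNReal.Tendsto.const_mul (tendsto_const_nhds.add h₀) (Or.inr hc)
  obtain ⟨ε, hε, hpos⟩ := ((hlim.eventually (gt_mem_nhds h)).and self_mem_nhdsWithin).exists
  exact ⟨ε, hpos, hε⟩

theorem ENNReal.natCast_mul_two_mul_inv_four_mul {n : ℕ} (hn : n ≠ 0) :
    (n : ℝ≥0∞) * (2 * (4 * (n : ℝ≥0∞))⁻¹) = 2⁻¹ := by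
  refine ENNReal.eq_inv_of_mul_eq_one_left ?_
  calc (n : ℝ≥0∞) * (2 * (4 * (n : ℝ≥0∞))⁻¹) * 2 = 4 * n * (4 * (n : ℝ≥0∞))⁻¹ := by ring
    _ = 1 := ENNReal.mul_inv_cancel (by simpa using hn) (by finiteness)

theorem EuclideanSpace.continuous_smul_apply {ι G : Type*} [TopologicalSpace G]
    [SMul G (EuclideanSpace ℝ ι)] [ContinuousSMul G (EuclideanSpace ℝ ι)]
    (x : EuclideanSpace ℝ ι) (i : ι) :
    Continuous fun u : G => (u • x) i :=
  (PiLp.continuous_apply 2 _ i).comp (continuous_id.smul continuous_const)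

theorem exists_mem_orbit_edist_smul_le_of_box {ι G : Type*} [Fintype ι] [Group G]
    [TopologicalSpace G] [CompactSpace G] [MeasurableSpace G] [MeasurableMul G]
    (μ : Measure G) [μ.IsMulLeftInvariant] [IsProbabilityMeasure μ]
    [MulAction G (EuclideanSpace ℝ ι)] [ContinuousSMul G (EuclideanSpace ℝ ι)]
    (x : EuclideanSpace ℝ ι) {a b : ι → ℝ} {ω : ℝ≥0∞}
    (hspread : ∀ i, ENNReal.ofReal (b i - a i) ≤ ω)
    (hbox : ∀ ε > 0, μ {u : G | ∀ i, (u • x) i ∈ Icc (a i - ε) (b i + ε)}ᶜ < 2⁻¹) :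
    ∃ z ∈ MulAction.orbit G x, ∀ g : G, edist z (g • z) ≤
      ENNReal.ofReal √(Fintype.card ι) * ω +
        actRhoPlus G (EuclideanSpace ℝ ι) (ENNReal.ofReal √(Fintype.card ι) * ω) := by
  set A : ℝ → Set G := fun ε => {u | ∀ i, (u • x) i ∈ Icc (a i - ε) (b i + ε)}
  have hdiam : ∀ ε, ∀ u ∈ A ε, ∀ v ∈ A ε, edist (u • x) (v • x) ≤
      ENNReal.ofReal √(Fintype.card ι) * (ω + ENNReal.ofReal (2 * ε)) := fun ε u hu v hv =>
    EuclideanSpace.edist_le_sqrt_card_mul fun i =>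
      edist_le_of_mem_Icc_of_ofReal_sub_le (hu i) (hv i) (hspread i)
  have hmono : Monotone A := fun ε ε' h u hu i =>
    Icc_subset_Icc (by linarith) (by linarith) (hu i)
  have hclosed : ∀ ε, IsClosed (A ε) := fun ε => by
    simp only [A, setOf_forall]
    exact isClosed_iInter fun i =>
      isClosed_Icc.preimage (EuclideanSpace.continuous_smul_apply x i)
  have hne : ∀ ε > 0, (A ε).Nonempty := fun ε hε =>
    (exists_mem_and_mul_mem μ (hbox ε hε) 1).imp fun _ hv => hv.1
  obtain ⟨h₀, hh₀⟩ := exists_forall_pos_mem_of_monotone hmono hne hclosed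
  refine ⟨h₀ • x, MulAction.mem_orbit _ _, fun g => edist_smul_le_add_actRhoPlus fun η hη => ?_⟩
  obtain ⟨ε, hε, hεη⟩ := ENNReal.exists_pos_mul_add_ofReal_lt ENNReal.ofReal_ne_top hη
  have hε₂ : 0 < ε / 2 := half_pos hε
  have hdiam' : ∀ u ∈ A (ε / 2), ∀ v ∈ A (ε / 2), edist (u • x) (v • x) ≤ η := fun u hu v hv =>
    (hdiam _ u hu v hv).trans (by rw [mul_div_cancel₀ _ two_ne_zero]; exact hεη.le)
  obtain ⟨v, hv, hgv⟩ := exists_mem_and_mul_mem μ (hbox _ hε₂) g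
  exact ⟨v • x, by simpa [mul_smul] using hdiam' _ (hh₀ _ hε₂) _ hgv, hdiam' _ hv _ (hh₀ _ hε₂)⟩

theorem stmt_11 {G : Type} [Group G] [MetricSpace G] [CompactSpace G] [IsTopologicalGroup G]
    [MeasurableSpace G] [BorelSpace G]
    (k : ℕ) (hk : 0 < k)
    [MulAction G (EuclideanSpace ℝ (Fin k))]
    [ContinuousSMul G (EuclideanSpace ℝ (Fin k))]
    (μG : Measure G) [μG.IsHaarMeasure] [IsProbabilityMeasure μG]
    (x : EuclideanSpace ℝ (Fin k))
    (r : ℝ≥0∞) (hr : r = ⨅ (κ : ℝ≥0∞) (_ : κ < (4 * (k : ℝ≥0∞))⁻¹), sepDist μG κ κ) :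
    ∃ z ∈ MulAction.orbit G x, ∀ g : G,
      edist z (g • z) ≤
        ENNReal.ofReal (Real.sqrt k) * actOmegaPlus G x r +
          actRhoPlus G (EuclideanSpace ℝ (Fin k))
            (ENNReal.ofReal (Real.sqrt k) * actOmegaPlus G x r) := by
  subst hr
  have : Nonempty (Fin k) := Fin.pos_iff_nonempty.mp hk
  set κ₀ : ℝ≥0∞ := (4 * (k : ℝ≥0∞))⁻¹
  have hκ₀ : 0 < κ₀ := ENNReal.inv_pos.2 (ENNReal.mul_ne_top (by norm_num) (natCast_ne_top k))
  have hκ₁ : κ₀ < 1 := ENNReal.inv_lt_one.2 <|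
    calc (1 : ℝ≥0∞) < 4 * 1 := by norm_num
      _ ≤ 4 * k := by gcongr; exact_mod_cast hk
  have hcard : (Fintype.card (Fin k) : ℝ≥0∞) * (2 * κ₀) = 2⁻¹ := by
    rw [Fintype.card_fin]
    exact ENNReal.natCast_mul_two_mul_inv_four_mul hk.ne'
  have hcoord := EuclideanSpace.continuous_smul_apply (G := G) x
  choose a ha ha' using fun i => exists_lower_quantile μG (hcoord i).measurable hκ₀ hκ₁
  choose b hb hb' using fun i => exists_upper_quantile μG (hcoord i).measurable hκ₀ hκ₁
  have hspread : ∀ i, ENNReal.ofReal (b i - a i) ≤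
      actOmegaPlus G x (⨅ (κ : ℝ≥0∞) (_ : κ < κ₀), sepDist μG κ κ) := fun i =>
    ofReal_sub_le_actOmegaPlus (LipschitzWith.of_edist_le fun p q => PiLp.edist_apply_le p q i)
      (measurableSet_le (hcoord i).measurable measurable_const)
      (measurableSet_le measurable_const (hcoord i).measurable) (ha i) (hb i)
  simpa using exists_mem_orbit_edist_smul_le_of_box μG x hspread fun ε hε =>
    hcard ▸ measure_compl_setOf_forall_mem_Icc_lt ha' hb' hε
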